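/- arXiv:2604.21024 — 2 statements merged into one kernel-verified Lean document; each statement's English description precedes it below -/
import Mathlib

section
/- Let q : ℝ → ℍ be a differentiable curve in the quaternions satisfying the attitude kinematic equation q'(t) = (1/2) • (q(t) * ω(t)), where for every t the quaternion ω(t) is pure imaginary (its real part is 0). Then the norm of q is conserved: ‖q(t)‖ = ‖q(0)‖ for all t ∈ ℝ. -/
open Quaternion

/-- If `q : ℝ → ℍ` is a differentiable curve of quaternions satisfying the attitude
kinematic equation `q'(t) = (1/2) • (q(t) * ω(t))` with `ω(t)` pure imaginary for all `t`
(real part zero), then the norm of `q` is conserved: `‖q t‖ = ‖q 0‖` for all `t`. -/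
theorem quaternion_kinematics_norm_conserved (q ω : ℝ → ℍ[ℝ])
    (hω : ∀ t, (ω t).re = 0)
    (hq : ∀ t, HasDerivAt q ((1 / 2 : ℝ) • (q t * ω t)) t) :
    ∀ t : ℝ, ‖q t‖ = ‖q 0‖ := by
  have key : ∀ t : ℝ, HasDerivAt (fun s => inner ℝ (q s) (q s) : ℝ → ℝ) 0 t := by
    intro t
    have h := (hq t).inner ℝ (hq t)
    have hstar : star (ω t) = -(ω t) := Quaternion.star_eq_neg.2 (hω t)
    have hzero : ((q t * ω t) * star (q t)).re = 0 := by
      have h1 : star (q t * ω t * star (q t)) = -(q t * ω t * star (q t)) := by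
        simp [star_mul, hstar, mul_assoc]
      have := congrArg QuaternionAlgebra.re h1
      simp only [Quaternion.re_star, Quaternion.re_neg] at this
      linarith
    have hzero' : (q t * star (q t * ω t)).re = 0 := by
      have : q t * star (q t * ω t) = -(q t * ω t * star (q t)) := by
        rw [star_mul, hstar]; simp [mul_assoc]
      rw [this, Quaternion.re_neg, hzero, neg_zero]
    have e : (inner ℝ (q t) ((1 / 2 : ℝ) • (q t * ω t)) : ℝ)
        + inner ℝ ((1 / 2 : ℝ) • (q t * ω t)) (q t) = 0 := by
      rw [real_inner_smul_left, real_inner_smul_right,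
        real_inner_comm (q t * ω t) (q t), Quaternion.inner_def, hzero]
      ring
    rw [e] at h
    exact h
  have hconst : ∀ t : ℝ, (inner ℝ (q t) (q t) : ℝ) = inner ℝ (q 0) (q 0) := by
    intro t
    exact is_const_of_deriv_eq_zero (fun s => (key s).differentiableAt)
      (fun s => (key s).deriv) t 0
  intro t
  rw [@norm_eq_sqrt_real_inner ℍ[ℝ], @norm_eq_sqrt_real_inner ℍ[ℝ], hconst t]
end

section
/- Let J : ℝ³ →ₗ[ℝ] ℝ³ be a symmetric positive-definite inertia operator and let ω : ℝ → ℝ³ be differentiable and satisfy the torque-free Euler equations J (ω'(t)) = -(ω(t) ×ᵥ J (ω(t))) for all t. Then the magnitude of the body-frame angular momentum is conserved: ‖J (ω(t))‖ = ‖J (ω(0))‖ for all t ∈ ℝ. -/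
open scoped RealInnerProductSpace

lemma inner_cross_self_right (a b : EuclideanSpace ℝ (Fin 3)) :
    ⟪b, (WithLp.toLp 2 (crossProduct a b) : EuclideanSpace ℝ (Fin 3))⟫ = 0 := by
  simp only [PiLp.inner_apply, RCLike.inner_apply, starRingEnd_apply, star_trivial,
    crossProduct, LinearMap.mk₂_apply, Fin.sum_univ_three, PiLp.toLp_apply]
  simp [Matrix.cons_val_zero, Matrix.cons_val_one]
  ring

/-- For a symmetric positive-definite inertia operator `J` and a differentiable body
angular velocity `ω` satisfying the torque-free Euler equations `J ω' = -(ω ×ᵥ J ω)`,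
the magnitude of the body-frame angular momentum `‖J ω‖` is conserved. -/
theorem euler_angular_momentum_norm_conserved
    (J : EuclideanSpace ℝ (Fin 3) →ₗ[ℝ] EuclideanSpace ℝ (Fin 3))
    (hsym : J.IsSymmetric)
    (hpos : ∀ x : EuclideanSpace ℝ (Fin 3), x ≠ 0 → 0 < ⟪x, J x⟫)
    (ω : ℝ → EuclideanSpace ℝ (Fin 3)) (hω : Differentiable ℝ ω)
    (heuler : ∀ t : ℝ, J (deriv ω t) = -(crossProduct (ω t) (J (ω t)))) :
    ∀ t : ℝ, ‖J (ω t)‖ = ‖J (ω 0)‖ := by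
  set L := LinearMap.toContinuousLinearMap J with hL
  set f : ℝ → ℝ := fun t => ⟪J (ω t), J (ω t)⟫ with hf
  have hg : ∀ t : ℝ, HasDerivAt (fun s => J (ω s)) (J (deriv ω t)) t := by
    intro t
    exact (L.hasFDerivAt.comp_hasDerivAt t (hω t).hasDerivAt)
  have hderiv : ∀ t : ℝ, HasDerivAt f 0 t := by
    intro t
    have h := (hg t).inner ℝ (hg t)
    have hz : ⟪J (ω t), J (deriv ω t)⟫ = 0 := by
      have he : J (deriv ω t) = WithLp.toLp 2 (-(crossProduct (ω t) (J (ω t)))) := by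
        rw [← heuler t]
      rw [he, WithLp.toLp_neg, inner_neg_right, inner_cross_self_right]
      ring
    have hz' : ⟪J (deriv ω t), J (ω t)⟫ = 0 := by
      rw [real_inner_comm]; exact hz
    rw [hz, hz', add_zero] at h
    exact h
  have hconst : ∀ t : ℝ, f t = f 0 := fun t =>
    is_const_of_deriv_eq_zero (fun s => (hderiv s).differentiableAt)
      (fun s => (hderiv s).deriv) t 0
  intro t
  have h2 : ‖J (ω t)‖ ^ 2 = ‖J (ω 0)‖ ^ 2 := by
    rw [← real_inner_self_eq_norm_sq, ← real_inner_self_eq_norm_sq]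
    exact hconst t
  exact (sq_eq_sq₀ (norm_nonneg _) (norm_nonneg _)).mp h2
end
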